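/- (Proposition on expected change of grit and reachability, discrete-time analog.) For every n : ℕ and every state s ∉ B: (1) the minimum over actions a ∈ A of the expected one-step change of grit, (∑ s', (p s a s').toReal * Γ n s') − Γ (n+1) s, equals 0; in particular this minimum is ≤ 0. (2) For every action a ∈ A, the expected one-step change of reachability satisfies (∑ s', (p s a s').toReal * Λ n s') − Λ (n+1) s ≤ 0, and the maximum of this quantity over actions a ∈ A equals 0. -/

import Mathlib

open scoped BigOperators

/-- Shift of a policy: `(shift π) k = π (k+1)`. -/
def shiftPolicy {S A : Type*} (π : ℕ → S → A) : ℕ → S → A := fun k => π (k + 1)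

/-- Hitting probability of `B` within `n` steps from state `s` under policy `π`:
`h π 0 s = (if s ∈ B then 1 else 0)` and
`h π (n+1) s = (if s ∈ B then 1 else ∑ s', (p s (π 0 s) s').toReal * h (shift π) n s')`. -/
noncomputable def hitProb {S A : Type*} [Fintype S]
    (p : S → A → PMF S) (B : Set S) [DecidablePred (· ∈ B)] :
    (ℕ → S → A) → ℕ → S → ℝ
  | _, 0, s => if s ∈ B then 1 else 0
  | π, n + 1, s =>
      if s ∈ B then 1
      else ∑ s', (p s (π 0 s) s').toReal * hitProb p B (shiftPolicy π) n s'

/-- Grit: the infimum over all policies of the hitting probability of `B`. -/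
noncomputable def grit {S A : Type*} [Fintype S]
    (p : S → A → PMF S) (B : Set S) [DecidablePred (· ∈ B)] (n : ℕ) (s : S) : ℝ :=
  ⨅ π : ℕ → S → A, hitProb p B π n s

/-- Reachability: the supremum over all policies of the hitting probability of `B`. -/
noncomputable def reach {S A : Type*} [Fintype S]
    (p : S → A → PMF S) (B : Set S) [DecidablePred (· ∈ B)] (n : ℕ) (s : S) : ℝ :=
  ⨆ π : ℕ → S → A, hitProb p B π n s

/-!
By backward induction a single policy minimises (resp. maximises) the `(n+1)`-step hitting
probability from every state at once: play, state by state, an action that minimises (resp.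
maximises) the expected value of the optimal `n`-step hitting probabilities, then follow the
optimal `n`-step policy. Hence grit and reachability are attained by policies and satisfy, off
`B`, the Bellman equations `Γ (n+1) s = min_a ∑ s', p s a s' * Γ n s'` and
`Λ (n+1) s = max_a ∑ s', p s a s' * Λ n s'`.
-/

lemma ciInf_sub_eq_zero_of_isLeast {ι α : Type*} [ConditionallyCompleteLattice α] [AddGroup α]
    [AddRightMono α] {f : ι → α} {m : α} (h : IsLeast (Set.range f) m) :
    ⨅ i, (f i - m) = 0 := by
  refine IsLeast.csInf_eq ⟨?_, ?_⟩
  · obtain ⟨i, hi⟩ := h.1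
    exact ⟨i, by simp only [hi, sub_self]⟩
  · rintro _ ⟨i, rfl⟩
    exact sub_nonneg.mpr (h.2 ⟨i, rfl⟩)

lemma ciSup_sub_eq_zero_of_isGreatest {ι α : Type*} [ConditionallyCompleteLattice α]
    [AddGroup α] [AddRightMono α] {f : ι → α} {m : α} (h : IsGreatest (Set.range f) m) :
    ⨆ i, (f i - m) = 0 := by
  refine IsGreatest.csSup_eq ⟨?_, ?_⟩
  · obtain ⟨i, hi⟩ := h.1
    exact ⟨i, by simp only [hi, sub_self]⟩
  · rintro _ ⟨i, rfl⟩
    exact sub_nonpos.mpr (h.2 ⟨i, rfl⟩)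

def consPolicy {S A : Type*} (a : S → A) (π : ℕ → S → A) : ℕ → S → A
  | 0 => a
  | k + 1 => π k

@[simp]
lemma shiftPolicy_consPolicy {S A : Type*} (a : S → A) (π : ℕ → S → A) :
    shiftPolicy (consPolicy a π) = π := rfl

section

variable {S A : Type*} [Fintype S] (p : S → A → PMF S) (B : Set S) [DecidablePred (· ∈ B)]

lemma hitProb_succ_of_notMem {π : ℕ → S → A} {n : ℕ} {s : S} (hs : s ∉ B) :
    hitProb p B π (n + 1) s =
      ∑ s', (p s (π 0 s) s').toReal * hitProb p B (shiftPolicy π) n s' := by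
  rw [hitProb, if_neg hs]

lemma hitProb_consPolicy_succ_of_notMem (a : A) (π : ℕ → S → A) (n : ℕ) {s : S} (hs : s ∉ B) :
    hitProb p B (consPolicy (fun _ => a) π) (n + 1) s =
      ∑ s', (p s a s').toReal * hitProb p B π n s' := by
  rw [hitProb_succ_of_notMem p B hs, shiftPolicy_consPolicy]
  rfl

section Optimal

variable [Finite A] [Nonempty A]

/-- `c = 1` gives a minimising and `c = -1` a maximising policy. -/
lemma exists_forall_mul_hitProb_le (c : ℝ) :
    ∀ n : ℕ, ∃ π : ℕ → S → A, ∀ σ s, c * hitProb p B π n s ≤ c * hitProb p B σ n s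
  | 0 => ⟨Classical.arbitrary _, fun _ _ => by simp only [hitProb, le_refl]⟩
  | n + 1 => by
    obtain ⟨π, hπ⟩ := exists_forall_mul_hitProb_le c n
    choose act hact using fun s : S =>
      Finite.exists_min fun a : A => c * ∑ s', (p s a s').toReal * hitProb p B π n s'
    refine ⟨consPolicy act π, fun σ s => ?_⟩
    by_cases hs : s ∈ B
    · simp only [hitProb, if_pos hs, le_refl]
    rw [hitProb_succ_of_notMem p B hs, hitProb_succ_of_notMem p B hs, shiftPolicy_consPolicy]
    calc c * ∑ s', (p s (act s) s').toReal * hitProb p B π n s'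
        ≤ c * ∑ s', (p s (σ 0 s) s').toReal * hitProb p B π n s' := hact s (σ 0 s)
      _ = ∑ s', (p s (σ 0 s) s').toReal * (c * hitProb p B π n s') := by
          simp only [Finset.mul_sum, mul_left_comm]
      _ ≤ ∑ s', (p s (σ 0 s) s').toReal * (c * hitProb p B (shiftPolicy σ) n s') :=
          Finset.sum_le_sum fun s' _ =>
            mul_le_mul_of_nonneg_left (hπ _ s') ENNReal.toReal_nonneg
      _ = c * ∑ s', (p s (σ 0 s) s').toReal * hitProb p B (shiftPolicy σ) n s' := by
          simp only [Finset.mul_sum, mul_left_comm]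

lemma exists_forall_isLeast_hitProb (n : ℕ) : ∃ π : ℕ → S → A,
    ∀ s, IsLeast (Set.range fun σ => hitProb p B σ n s) (hitProb p B π n s) := by
  obtain ⟨π, hπ⟩ := exists_forall_mul_hitProb_le p B 1 n
  simp only [one_mul] at hπ
  exact ⟨π, fun s => ⟨⟨π, rfl⟩, by rintro _ ⟨σ, rfl⟩; exact hπ σ s⟩⟩

lemma exists_forall_isGreatest_hitProb (n : ℕ) : ∃ π : ℕ → S → A,
    ∀ s, IsGreatest (Set.range fun σ => hitProb p B σ n s) (hitProb p B π n s) := by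
  obtain ⟨π, hπ⟩ := exists_forall_mul_hitProb_le p B (-1) n
  simp only [neg_one_mul, neg_le_neg_iff] at hπ
  exact ⟨π, fun s => ⟨⟨π, rfl⟩, by rintro _ ⟨σ, rfl⟩; exact hπ σ s⟩⟩

lemma exists_forall_grit_eq_hitProb (n : ℕ) :
    ∃ π : ℕ → S → A, ∀ s, grit p B n s = hitProb p B π n s := by
  obtain ⟨π, hπ⟩ := exists_forall_isLeast_hitProb p B n
  exact ⟨π, fun s => (hπ s).csInf_eq⟩

lemma exists_forall_reach_eq_hitProb (n : ℕ) :
    ∃ π : ℕ → S → A, ∀ s, reach p B n s = hitProb p B π n s := by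
  obtain ⟨π, hπ⟩ := exists_forall_isGreatest_hitProb p B n
  exact ⟨π, fun s => (hπ s).csSup_eq⟩

lemma grit_le_hitProb (σ : ℕ → S → A) (n : ℕ) (s : S) : grit p B n s ≤ hitProb p B σ n s := by
  obtain ⟨π, hπ⟩ := exists_forall_isLeast_hitProb p B n
  exact (show grit p B n s = _ from (hπ s).csInf_eq).trans_le ((hπ s).2 ⟨σ, rfl⟩)

lemma hitProb_le_reach (σ : ℕ → S → A) (n : ℕ) (s : S) : hitProb p B σ n s ≤ reach p B n s := by
  obtain ⟨π, hπ⟩ := exists_forall_isGreatest_hitProb p B n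
  exact ((hπ s).2 ⟨σ, rfl⟩).trans_eq (show reach p B n s = _ from (hπ s).csSup_eq).symm

variable {n : ℕ} {s : S}

lemma grit_succ_le_of_notMem (hs : s ∉ B) (a : A) :
    grit p B (n + 1) s ≤ ∑ s', (p s a s').toReal * grit p B n s' := by
  obtain ⟨π, hπ⟩ := exists_forall_grit_eq_hitProb p B n
  simpa only [hπ, hitProb_consPolicy_succ_of_notMem p B a π n hs]
    using grit_le_hitProb p B (consPolicy (fun _ => a) π) (n + 1) s

lemma le_reach_succ_of_notMem (hs : s ∉ B) (a : A) :
    ∑ s', (p s a s').toReal * reach p B n s' ≤ reach p B (n + 1) s := by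
  obtain ⟨π, hπ⟩ := exists_forall_reach_eq_hitProb p B n
  simpa only [hπ, hitProb_consPolicy_succ_of_notMem p B a π n hs]
    using hitProb_le_reach p B (consPolicy (fun _ => a) π) (n + 1) s

lemma isLeast_grit_succ_of_notMem (hs : s ∉ B) :
    IsLeast (Set.range fun a => ∑ s', (p s a s').toReal * grit p B n s') (grit p B (n + 1) s) := by
  refine ⟨?_, by rintro _ ⟨a, rfl⟩; exact grit_succ_le_of_notMem p B hs a⟩
  obtain ⟨π, hπ⟩ := exists_forall_grit_eq_hitProb p B (n + 1)
  refine ⟨π 0 s, le_antisymm ?_ (grit_succ_le_of_notMem p B hs _)⟩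
  rw [hπ, hitProb_succ_of_notMem p B hs]
  exact Finset.sum_le_sum fun s' _ =>
    mul_le_mul_of_nonneg_left (grit_le_hitProb p B _ n s') ENNReal.toReal_nonneg

lemma isGreatest_reach_succ_of_notMem (hs : s ∉ B) :
    IsGreatest (Set.range fun a => ∑ s', (p s a s').toReal * reach p B n s')
      (reach p B (n + 1) s) := by
  refine ⟨?_, by rintro _ ⟨a, rfl⟩; exact le_reach_succ_of_notMem p B hs a⟩
  obtain ⟨π, hπ⟩ := exists_forall_reach_eq_hitProb p B (n + 1)
  refine ⟨π 0 s, le_antisymm (le_reach_succ_of_notMem p B hs _) ?_⟩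
  rw [hπ, hitProb_succ_of_notMem p B hs]
  exact Finset.sum_le_sum fun s' _ =>
    mul_le_mul_of_nonneg_left (hitProb_le_reach p B _ n s') ENNReal.toReal_nonneg

end Optimal

end

theorem expected_change_grit_reach_general {S A : Type*} [Fintype S]
    [Fintype A] [Nonempty A]
    (p : S → A → PMF S) (B : Set S) [DecidablePred (· ∈ B)] :
    ∀ (n : ℕ) (s : S), s ∉ B →
      ((⨅ a : A, ((∑ s', (p s a s').toReal * grit p B n s') - grit p B (n + 1) s)) = 0 ∧
       (⨅ a : A, ((∑ s', (p s a s').toReal * grit p B n s') - grit p B (n + 1) s)) ≤ 0) ∧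
      ((∀ a : A, (∑ s', (p s a s').toReal * reach p B n s') - reach p B (n + 1) s ≤ 0) ∧
       (⨆ a : A, ((∑ s', (p s a s').toReal * reach p B n s') - reach p B (n + 1) s)) = 0) := by
  intro n s hs
  have hgrit := ciInf_sub_eq_zero_of_isLeast (isLeast_grit_succ_of_notMem p B (n := n) hs)
  refine ⟨⟨hgrit, hgrit.le⟩, fun a => ?_,
    ciSup_sub_eq_zero_of_isGreatest (isGreatest_reach_succ_of_notMem p B (n := n) hs)⟩
  exact sub_nonpos.mpr (le_reach_succ_of_notMem p B hs a)

/-- **Expected change of grit and reachability, discrete-time analog.**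
For every `n` and every state `s ∉ B`:
(1) the minimum over actions of the expected one-step change of grit,
`(∑ s', (p s a s').toReal * Γ n s') - Γ (n+1) s`, equals `0`; in particular it is `≤ 0`;
(2) for every action the expected one-step change of reachability is `≤ 0`, and its maximum
over actions equals `0`. -/
theorem expected_change_grit_reach {S A : Type*} [Fintype S] [Nonempty S]
    [Fintype A] [Nonempty A]
    (p : S → A → PMF S) (B : Set S) [DecidablePred (· ∈ B)] :
    ∀ (n : ℕ) (s : S), s ∉ B →
      ((⨅ a : A, ((∑ s', (p s a s').toReal * grit p B n s') - grit p B (n + 1) s)) = 0 ∧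
       (⨅ a : A, ((∑ s', (p s a s').toReal * grit p B n s') - grit p B (n + 1) s)) ≤ 0) ∧
      ((∀ a : A, (∑ s', (p s a s').toReal * reach p B n s') - reach p B (n + 1) s ≤ 0) ∧
       (⨆ a : A, ((∑ s', (p s a s').toReal * reach p B n s') - reach p B (n + 1) s)) = 0) :=
  expected_change_grit_reach_general p B
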